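/- In the Ariki-Koike algebra H_{n,r}(q), for every color word c = (c_1,…,c_n) ∈ {1,…,r}^n and every 1 ≤ i ≤ n-1, one has: T_i L_c = L_{c s_i} T_i + (q-1) L_c if c_i < c_{i+1}; T_i L_c = L_c T_i if c_i = c_{i+1}; and T_i L_c = L_{c s_i} T_i - (q-1) L_{c s_i} if c_i > c_{i+1}; where c s_i is obtained from c by exchanging c_i and c_{i+1}. -/

import Mathlib

/-!
STATEMENT 7: In the Ariki-Koike algebra `H_{n,r}(q)`, for every color word
`c = (c_1,…,c_n) ∈ {1,…,r}^n` and every `1 ≤ i ≤ n-1` (here 0-indexed positions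
`j, j+1` with `j+1 < n`), one has:
* `T_i L_c = L_{c s_i} T_i + (q-1) L_c` if `c_i < c_{i+1}`;
* `T_i L_c = L_c T_i` if `c_i = c_{i+1}`;
* `T_i L_c = L_{c s_i} T_i - (q-1) L_{c s_i}` if `c_i > c_{i+1}`;
where `c s_i` is obtained from `c` by exchanging `c_i` and `c_{i+1}`.
-/

namespace AKSPaper

noncomputable section

open Polynomial

/-- The Lagrange interpolation polynomial `P_k(X) = ∏_{l ≠ k} (X - u_l)/(u_k - u_l)`. -/
def Lag {r : ℕ} (u : Fin r → ℂ) (k : Fin r) : ℂ[X] :=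
  ∏ l ∈ Finset.univ.erase k, (Polynomial.C ((u k - u l)⁻¹) * (X - Polynomial.C (u l)))

/-- The free algebra on the generators `T_1, …, T_{n-1}` (indexed by `Fin (n-1)`) and
`ξ_1, …, ξ_n` (indexed by `Fin n`). -/
abbrev FA (n : ℕ) := FreeAlgebra ℂ (Fin (n - 1) ⊕ Fin n)

/-- The generator `T_{i+1}` in the free algebra. -/
def Tf {n : ℕ} (i : Fin (n - 1)) : FA n := FreeAlgebra.ι ℂ (Sum.inl i)

/-- The generator `ξ_{j+1}` in the free algebra. -/
def Xf {n : ℕ} (j : Fin n) : FA n := FreeAlgebra.ι ℂ (Sum.inr j)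

/-- For the T-generator of index `i`, the position of `ξ_i` (0-indexed). -/
def loIdx {n : ℕ} (i : Fin (n - 1)) : Fin n := ⟨i.1, by have := i.isLt; omega⟩

/-- For the T-generator of index `i`, the position of `ξ_{i+1}` (0-indexed). -/
def hiIdx {n : ℕ} (i : Fin (n - 1)) : Fin n := ⟨i.1 + 1, by have := i.isLt; omega⟩

/-- The defining relations of the Ariki-Koike algebra `H_{n,r}(q)` in Shoji's
normalized presentation, with parameters `u_1, …, u_r`. -/
inductive AKRel (n r : ℕ) (q : ℂ) (u : Fin r → ℂ) : FA n → FA n → Prop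
  | quad (i : Fin (n - 1)) :
      AKRel n r q u ((Tf i - algebraMap ℂ (FA n) q) * (Tf i + 1)) 0
  | braid (i j : Fin (n - 1)) (h : (i : ℕ) + 1 = j) :
      AKRel n r q u (Tf i * Tf j * Tf i) (Tf j * Tf i * Tf j)
  | commT (i j : Fin (n - 1)) (h : (i : ℕ) + 2 ≤ j ∨ (j : ℕ) + 2 ≤ i) :
      AKRel n r q u (Tf i * Tf j) (Tf j * Tf i)
  | xiAnn (j : Fin n) :
      AKRel n r q u
        (Polynomial.aeval (Xf j) (∏ l : Fin r, (X - Polynomial.C (u l)))) 0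
  | xiComm (i j : Fin n) : AKRel n r q u (Xf i * Xf j) (Xf j * Xf i)
  | cross (i : Fin (n - 1)) :
      AKRel n r q u (Tf i * Xf (loIdx i))
        (Xf (hiIdx i) * Tf i - (q - 1) •
          ∑ p ∈ Finset.univ.filter (fun p : Fin r × Fin r => p.1 < p.2),
            (u p.2 - u p.1) •
              (Polynomial.aeval (Xf (loIdx i)) (Lag u p.1) *
                Polynomial.aeval (Xf (hiIdx i)) (Lag u p.2)))
  | sumComm (i : Fin (n - 1)) :
      AKRel n r q u (Tf i * (Xf (hiIdx i) + Xf (loIdx i)))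
        ((Xf (hiIdx i) + Xf (loIdx i)) * Tf i)
  | farComm (i : Fin (n - 1)) (j : Fin n) (h : (j : ℕ) ≠ i ∧ (j : ℕ) ≠ (i : ℕ) + 1) :
      AKRel n r q u (Tf i * Xf j) (Xf j * Tf i)

/-- The Ariki-Koike algebra `H_{n,r}(q)` (for `q = 0`, the 0-Ariki-Koike-Shoji
algebra). -/
abbrev AK (n r : ℕ) (q : ℂ) (u : Fin r → ℂ) := RingQuot (AKRel n r q u)

/-- The generator `T_{i+1}` of `H_{n,r}(q)`. -/
def Tg {n r : ℕ} {q : ℂ} {u : Fin r → ℂ} (i : Fin (n - 1)) : AK n r q u :=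
  RingQuot.mkAlgHom ℂ (AKRel n r q u) (Tf i)

/-- The generator `T` of `H_{n,r}(q)` acting on 0-indexed positions `j, j+1`. -/
def TgPos {n r : ℕ} {q : ℂ} {u : Fin r → ℂ} (j : ℕ) (h : j + 1 < n) : AK n r q u :=
  Tg ⟨j, by omega⟩

/-- The generator `ξ_{j+1}` of `H_{n,r}(q)`. -/
def Xg {n r : ℕ} {q : ℂ} {u : Fin r → ℂ} (j : Fin n) : AK n r q u :=
  RingQuot.mkAlgHom ℂ (AKRel n r q u) (Xf j)

/-- The Lagrange idempotent `L_c = P_{c_1}(ξ_1) ⋯ P_{c_n}(ξ_n)`. -/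
def L {n r : ℕ} {q : ℂ} {u : Fin r → ℂ} (c : Fin n → Fin r) : AK n r q u :=
  (List.ofFn fun j : Fin n =>
    Polynomial.aeval (Xg (q := q) (u := u) j) (Lag u (c j))).prod

/-- The elementary transposition exchanging the 0-indexed positions `j`, `j+1`. -/
def sw {n : ℕ} (j : ℕ) (h : j + 1 < n) : Equiv.Perm (Fin n) :=
  Equiv.swap ⟨j, by omega⟩ ⟨j + 1, h⟩

/-- The number of inversions of a permutation. -/
def invnum {n : ℕ} (σ : Equiv.Perm (Fin n)) : ℕ :=
  (Finset.univ.filter fun p : Fin n × Fin n => p.1 < p.2 ∧ σ p.2 < σ p.1).card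

/-- `Tw` is the family `σ ↦ T_σ` (product of the `T_i` along any reduced word). -/
def IsTFam {n r : ℕ} {q : ℂ} {u : Fin r → ℂ}
    (Tw : Equiv.Perm (Fin n) → AK n r q u) : Prop :=
  Tw 1 = 1 ∧ ∀ (j : ℕ) (h : j + 1 < n) (τ : Equiv.Perm (Fin n)),
    invnum (sw j h * τ) = invnum τ + 1 → Tw (sw j h * τ) = TgPos j h * Tw τ

/-- `i` (0-indexed, `i+1 < n`) is a descent of the permutation `σ`. -/
def descPerm {n : ℕ} (σ : Equiv.Perm (Fin n)) (i : ℕ) : Prop :=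
  ∃ h : i + 1 < n, σ ⟨i + 1, h⟩ < σ ⟨i, by omega⟩

/-- `i` (0-indexed) is a descent of the composition `I` of `n`. -/
def descComp {n : ℕ} (I : Composition n) (i : ℕ) : Prop :=
  i + 1 < n ∧ ∃ k ∈ Finset.range (n + 1), (I.blocks.take k).sum = i + 1

/-- `[I, c]` is a cycloribbon: weakly increasing along rows, weakly decreasing down
columns. -/
def IsCycloribbon {n r : ℕ} (I : Composition n) (c : Fin n → Fin r) : Prop :=
  ∀ (i : ℕ) (h : i + 1 < n),
    (descComp I i → c ⟨i + 1, h⟩ ≤ c ⟨i, by omega⟩) ∧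
    (¬ descComp I i → c ⟨i, by omega⟩ ≤ c ⟨i + 1, h⟩)

/-- `[I, c]` is an anticycloribbon: weakly decreasing along rows, weakly increasing
down columns. -/
def IsAnticycloribbon {n r : ℕ} (I : Composition n) (c : Fin n → Fin r) : Prop :=
  ∀ (i : ℕ) (h : i + 1 < n),
    (descComp I i → c ⟨i, by omega⟩ ≤ c ⟨i + 1, h⟩) ∧
    (¬ descComp I i → c ⟨i + 1, h⟩ ≤ c ⟨i, by omega⟩)

/-- `i` is a descent of the shape of the colored ribbon `φ([I,c])`. -/
def descPhi {n r : ℕ} (I : Composition n) (c : Fin n → Fin r) (i : ℕ) : Prop :=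
  ∃ h : i + 1 < n,
    (descComp I i ∧ c ⟨i + 1, h⟩ = c ⟨i, by omega⟩) ∨
    (¬ descComp I i ∧ c ⟨i + 1, h⟩ ≠ c ⟨i, by omega⟩)

/-!
Write `x = ξ_i`, `y = ξ_{i+1}`, `T = T_i`, `E_{ab} = P_a(x) P_b(y)` and
`S = ∑_{a<b} (u_b - u_a) E_{ab}`. As `x` and `y` commute and are annihilated by `∏ (X - u_l)`,
the `E_{ab}` are orthogonal idempotents with sum `1`, and `x E_{ab} = u_a E_{ab}`,
`y E_{ab} = u_b E_{ab}`. Sandwiching `T x = y T - (q-1) S` and its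
consequence `T y = x T + (q-1) S` (from `T (x + y) = (x + y) T`) between `E_{cd}` and `E_{ab}`
gives `(u_a - u_d) E_{cd} T E_{ab} = -(q-1) E_{cd} S E_{ab}` and
`(u_b - u_c) E_{cd} T E_{ab} = (q-1) E_{cd} S E_{ab}`. Hence `E_{cd} T E_{ab}` vanishes unless
`(c,d) = (b,a)`, or `(c,d) = (a,b)` with `a < b`, where it is `(q-1) E_{ab}`. Summing over
`(c,d)` on either side of `T` gives
`T E_{ab} = E_{ba} T + [a<b] (q-1) E_{ab} - [b<a] (q-1) E_{ba}`, and `L_c` is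
`E_{c_i c_{i+1}}` multiplied on both sides by factors in the other `ξ_k`, which commute with `T_i`.
-/

theorem commute_aeval_of_commute {R A : Type*} [CommSemiring R] [Semiring A] [Algebra R A]
    {z y : A} (h : Commute z y) (p : R[X]) : Commute z (aeval y p) :=
  Algebra.commute_of_mem_adjoin_singleton_of_commute (aeval_mem_adjoin_singleton R y) h

section Lagrange

variable {r : ℕ} {u : Fin r → ℂ}

theorem eval_Lag (hu : Function.Injective u) (a b : Fin r) :
    (Lag u a).eval (u b) = if b = a then 1 else 0 := by
  rw [Lag, eval_prod]
  split_ifs with hba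
  · subst hba
    refine Finset.prod_eq_one fun l hl => ?_
    have hne : u b - u l ≠ 0 :=
      sub_ne_zero.mpr fun e => (Finset.mem_erase.mp hl).1 (hu e).symm
    simp [inv_mul_cancel₀ hne]
  · exact Finset.prod_eq_zero (Finset.mem_erase.mpr ⟨hba, Finset.mem_univ b⟩) (by simp)

variable {A : Type*} [Ring A] [Algebra ℂ A] {x : A}

theorem aeval_eq_zero_of_eval_eq_zero (hu : Function.Injective u)
    (hx : aeval x (∏ l : Fin r, (X - C (u l))) = 0) {f : ℂ[X]}
    (hf : ∀ l, f.eval (u l) = 0) : aeval x f = 0 := by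
  obtain ⟨g, rfl⟩ : (∏ l : Fin r, (X - C (u l))) ∣ f :=
    Finset.prod_dvd_of_coprime ((pairwise_coprime_X_sub_C hu).set_pairwise _)
      fun l _ => dvd_iff_isRoot.mpr (hf l)
  rw [map_mul, hx, zero_mul]

theorem aeval_Lag_mul_aeval_Lag (hu : Function.Injective u)
    (hx : aeval x (∏ l : Fin r, (X - C (u l))) = 0) (a b : Fin r) :
    aeval x (Lag u a) * aeval x (Lag u b) = if a = b then aeval x (Lag u a) else 0 := by
  rw [← map_mul]
  split_ifs with hab
  · subst hab
    rw [← sub_eq_zero, ← map_sub]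
    refine aeval_eq_zero_of_eval_eq_zero hu hx fun l => ?_
    by_cases hla : l = a <;> simp [eval_Lag hu, hla]
  · refine aeval_eq_zero_of_eval_eq_zero hu hx fun l => ?_
    by_cases hla : l = a
    · simp [eval_Lag hu, hla, hab]
    · simp [eval_Lag hu, hla]

theorem sum_aeval_Lag (hu : Function.Injective u)
    (hx : aeval x (∏ l : Fin r, (X - C (u l))) = 0) : ∑ a : Fin r, aeval x (Lag u a) = 1 := by
  rw [← map_sum, ← sub_eq_zero, ← map_one (aeval (R := ℂ) x), ← map_sub]
  exact aeval_eq_zero_of_eval_eq_zero hu hx fun l => by simp [eval_finsetSum, eval_Lag hu]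

theorem mul_aeval_Lag (hu : Function.Injective u)
    (hx : aeval x (∏ l : Fin r, (X - C (u l))) = 0) (a : Fin r) :
    x * aeval x (Lag u a) = u a • aeval x (Lag u a) := by
  rw [← sub_eq_zero]
  have : aeval x ((X - C (u a)) * Lag u a) = 0 :=
    aeval_eq_zero_of_eval_eq_zero hu hx fun l => by
      by_cases hla : l = a <;> simp [eval_Lag hu, hla]
  simpa [sub_mul, Algebra.smul_def] using this

theorem aeval_Lag_mul (hu : Function.Injective u)
    (hx : aeval x (∏ l : Fin r, (X - C (u l))) = 0) (a : Fin r) :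
    aeval x (Lag u a) * x = u a • aeval x (Lag u a) := by
  rw [← (commute_aeval_of_commute (Commute.refl x) _).eq, mul_aeval_Lag hu hx]

end Lagrange

section LagrangePair

variable {A : Type*} [Ring A] [Algebra ℂ A] {r : ℕ} {u : Fin r → ℂ} {x y T : A} {κ : ℂ}

def lagProd (u : Fin r → ℂ) (x y : A) (a b : Fin r) : A :=
  aeval x (Lag u a) * aeval y (Lag u b)

def crossSum (u : Fin r → ℂ) (x y : A) : A :=
  ∑ p ∈ Finset.univ.filter (fun p : Fin r × Fin r => p.1 < p.2),
    (u p.2 - u p.1) • lagProd u x y p.1 p.2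

theorem lagProd_mul_lagProd (hu : Function.Injective u) (hxy : Commute x y)
    (hx : aeval x (∏ l : Fin r, (X - C (u l))) = 0)
    (hy : aeval y (∏ l : Fin r, (X - C (u l))) = 0) (a b c d : Fin r) :
    lagProd u x y a b * lagProd u x y c d =
      if a = c ∧ b = d then lagProd u x y a b else 0 := by
  have hcomm : Commute (aeval y (Lag u b)) (aeval x (Lag u c)) :=
    commute_aeval_of_commute (commute_aeval_of_commute hxy _).symm _
  rw [lagProd, lagProd, mul_assoc, ← mul_assoc (aeval y _), hcomm.eq, mul_assoc,
    ← mul_assoc, aeval_Lag_mul_aeval_Lag hu hx, aeval_Lag_mul_aeval_Lag hu hy]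
  by_cases hac : a = c <;> by_cases hbd : b = d <;> simp [hac, hbd]

theorem sum_lagProd (hu : Function.Injective u)
    (hx : aeval x (∏ l : Fin r, (X - C (u l))) = 0)
    (hy : aeval y (∏ l : Fin r, (X - C (u l))) = 0) :
    ∑ p : Fin r × Fin r, lagProd u x y p.1 p.2 = 1 := by
  simp only [lagProd, Fintype.sum_prod_type, ← Finset.mul_sum, ← Finset.sum_mul,
    sum_aeval_Lag hu hx, sum_aeval_Lag hu hy, one_mul]

theorem fst_mul_lagProd (hu : Function.Injective u)
    (hx : aeval x (∏ l : Fin r, (X - C (u l))) = 0) (a b : Fin r) :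
    x * lagProd u x y a b = u a • lagProd u x y a b := by
  rw [lagProd, ← mul_assoc, mul_aeval_Lag hu hx, smul_mul_assoc]

theorem lagProd_mul_fst (hu : Function.Injective u) (hxy : Commute x y)
    (hx : aeval x (∏ l : Fin r, (X - C (u l))) = 0) (a b : Fin r) :
    lagProd u x y a b * x = u a • lagProd u x y a b := by
  rw [lagProd, mul_assoc, ← (commute_aeval_of_commute hxy _).eq, ← mul_assoc,
    aeval_Lag_mul hu hx, smul_mul_assoc]

theorem snd_mul_lagProd (hu : Function.Injective u) (hxy : Commute x y)
    (hy : aeval y (∏ l : Fin r, (X - C (u l))) = 0) (a b : Fin r) :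
    y * lagProd u x y a b = u b • lagProd u x y a b := by
  rw [lagProd, ← mul_assoc, (commute_aeval_of_commute hxy.symm _).eq, mul_assoc,
    mul_aeval_Lag hu hy, mul_smul_comm]

theorem lagProd_mul_snd (hu : Function.Injective u)
    (hy : aeval y (∏ l : Fin r, (X - C (u l))) = 0) (a b : Fin r) :
    lagProd u x y a b * y = u b • lagProd u x y a b := by
  rw [lagProd, mul_assoc, aeval_Lag_mul hu hy, mul_smul_comm]

theorem crossSum_mul_lagProd (hu : Function.Injective u) (hxy : Commute x y)
    (hx : aeval x (∏ l : Fin r, (X - C (u l))) = 0)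
    (hy : aeval y (∏ l : Fin r, (X - C (u l))) = 0) (a b : Fin r) :
    crossSum u x y * lagProd u x y a b =
      if a < b then (u b - u a) • lagProd u x y a b else 0 := by
  simp only [crossSum, Finset.sum_mul, smul_mul_assoc, lagProd_mul_lagProd hu hxy hx hy]
  rw [Finset.sum_filter, Finset.sum_eq_single (a, b)]
  · simp
  · rintro ⟨c, d⟩ - hne
    simp_all
  · simp

-- The first summand is tautological: it makes the right-hand side summable over `(c, d)`.
theorem lagProd_mul_mul_lagProd (hu : Function.Injective u) (hxy : Commute x y)
    (hx : aeval x (∏ l : Fin r, (X - C (u l))) = 0)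
    (hy : aeval y (∏ l : Fin r, (X - C (u l))) = 0)
    (hTx : T * x = y * T - κ • crossSum u x y) (hTs : T * (y + x) = (y + x) * T)
    (a b c d : Fin r) :
    lagProd u x y c d * T * lagProd u x y a b =
      (if c = b ∧ d = a then lagProd u x y c d * T * lagProd u x y a b else 0) +
        (if c = a ∧ d = b ∧ a < b then κ • lagProd u x y a b else 0) := by
  have hTy : T * y = x * T + κ • crossSum u x y := by
    rw [mul_add, add_mul, hTx, ← sub_eq_zero] at hTs
    rw [← sub_eq_zero, ← hTs]
    abel
  have hs : lagProd u x y c d * crossSum u x y * lagProd u x y a b =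
      if c = a ∧ d = b ∧ a < b then (u b - u a) • lagProd u x y a b else 0 := by
    rw [mul_assoc, crossSum_mul_lagProd hu hxy hx hy]
    split_ifs <;> simp_all [lagProd_mul_lagProd hu hxy hx hy]
  set M := lagProd u x y c d * T * lagProd u x y a b
  set s := lagProd u x y c d * crossSum u x y * lagProd u x y a b
  have hlo : u a • M = u d • M - κ • s := calc
    u a • M = lagProd u x y c d * (T * x) * lagProd u x y a b := by
      rw [← mul_assoc _ T x, mul_assoc _ x, fst_mul_lagProd hu hx, mul_smul_comm]
    _ = u d • M - κ • s := by
      simp only [hTx, mul_sub, sub_mul, mul_smul_comm, smul_mul_assoc, ← mul_assoc,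
        lagProd_mul_snd hu hy]
      rfl
  have hhi : u b • M = u c • M + κ • s := calc
    u b • M = lagProd u x y c d * (T * y) * lagProd u x y a b := by
      rw [← mul_assoc _ T y, mul_assoc _ y, snd_mul_lagProd hu hxy hy, mul_smul_comm]
    _ = u c • M + κ • s := by
      simp only [hTy, mul_add, add_mul, mul_smul_comm, smul_mul_assoc, ← mul_assoc,
        lagProd_mul_fst hu hxy hx]
      rfl
  by_cases hba : c = b ∧ d = a
  · obtain ⟨rfl, rfl⟩ := hba
    rw [if_pos ⟨rfl, rfl⟩, if_neg fun h => h.2.2.ne h.2.1, add_zero]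
  rw [if_neg hba, zero_add]
  split_ifs at hs ⊢ with hab
  · obtain ⟨rfl, rfl, hab⟩ := hab
    refine smul_right_injective A (sub_ne_zero.mpr (hu.ne hab.ne')) ?_
    dsimp only
    rw [sub_smul, hhi, hs]
    module
  · rw [hs, smul_zero, sub_zero, ← sub_eq_zero, ← sub_smul] at hlo
    rw [hs, smul_zero, add_zero, ← sub_eq_zero, ← sub_smul] at hhi
    rcases not_and_or.mp hba with hcb | hda
    · exact (smul_eq_zero.mp hhi).resolve_left (sub_ne_zero.mpr (hu.ne (Ne.symm hcb)))
    · exact (smul_eq_zero.mp hlo).resolve_left (sub_ne_zero.mpr (hu.ne (Ne.symm hda)))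

theorem mul_lagProd_of_cross (hu : Function.Injective u) (hxy : Commute x y)
    (hx : aeval x (∏ l : Fin r, (X - C (u l))) = 0)
    (hy : aeval y (∏ l : Fin r, (X - C (u l))) = 0)
    (hTx : T * x = y * T - κ • crossSum u x y) (hTs : T * (y + x) = (y + x) * T)
    (a b : Fin r) :
    T * lagProd u x y a b = lagProd u x y b a * T +
      (if a < b then κ • lagProd u x y a b else 0) -
        (if b < a then κ • lagProd u x y b a else 0) := by
  have hsandwich := lagProd_mul_mul_lagProd hu hxy hx hy hTx hTs
  have hleft : T * lagProd u x y a b = lagProd u x y b a * T * lagProd u x y a b +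
      (if a < b then κ • lagProd u x y a b else 0) := calc
    T * lagProd u x y a b =
        ∑ p : Fin r × Fin r, lagProd u x y p.1 p.2 * T * lagProd u x y a b := by
      rw [← Finset.sum_mul, ← Finset.sum_mul, sum_lagProd hu hx hy, one_mul]
    _ = _ := by
      rw [Finset.sum_congr rfl fun p _ => hsandwich a b p.1 p.2]
      simp [Finset.sum_add_distrib, Fintype.sum_prod_type, ite_and]
  have hright : lagProd u x y b a * T * lagProd u x y a b = lagProd u x y b a * T -
      (if b < a then κ • lagProd u x y b a else 0) := by
    rw [eq_sub_iff_add_eq]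
    calc _ = ∑ p : Fin r × Fin r, lagProd u x y b a * T * lagProd u x y p.1 p.2 := by
          rw [Finset.sum_congr rfl fun p _ => hsandwich p.1 p.2 b a]
          simp [Finset.sum_add_distrib, Fintype.sum_prod_type, ite_and]
      _ = lagProd u x y b a * T := by
          rw [← Finset.mul_sum, sum_lagProd hu hx hy, mul_one]
  rw [hleft, hright]
  abel

end LagrangePair

theorem prod_ofFn_add_two_add {M : Type*} [Monoid M] {j m : ℕ}
    (f : Fin (j + 2 + m) → M) :
    (List.ofFn f).prod =
      (List.ofFn fun k : Fin j => f (k.castLE (by omega))).prod *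
        (f ⟨j, by omega⟩ * f ⟨j + 1, by omega⟩) *
          (List.ofFn fun k : Fin m => f (k.natAdd (j + 2))).prod := by
  rw [List.ofFn_add, List.prod_append, List.ofFn_add (n := j) (m := 2)]
  simp only [Fin.castLE_castLE, List.ofFn_succ, Fin.succ_zero_eq_one, List.ofFn_zero,
    List.prod_append, List.prod_cons, List.prod_nil, mul_one, mul_assoc]
  rfl

theorem comp_sw_of_eq {n : ℕ} {α : Type*} (c : Fin n → α) (j : ℕ) (h : j + 1 < n)
    (hc : c ⟨j, by omega⟩ = c ⟨j + 1, h⟩) : c ∘ sw j h = c := by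
  funext k
  simp only [Function.comp_apply, sw, Equiv.swap_apply_def]
  split_ifs <;> simp_all

section AK

variable {n r : ℕ} {q : ℂ} {u : Fin r → ℂ}

theorem Xg_commute (k l : Fin n) : Commute (Xg (q := q) (u := u) k) (Xg l) := by
  have := RingQuot.mkAlgHom_rel ℂ (AKRel.xiComm (q := q) (u := u) k l)
  rw [map_mul, map_mul] at this
  exact this

theorem aeval_Xg_prod_X_sub_C (k : Fin n) :
    aeval (Xg (q := q) (u := u) k) (∏ l : Fin r, (X - C (u l))) = 0 := by
  rw [Xg, aeval_algHom_apply, RingQuot.mkAlgHom_rel ℂ (AKRel.xiAnn k), map_zero]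

theorem Tg_commute_Xg (i : Fin (n - 1)) (k : Fin n) (hlo : (k : ℕ) ≠ i)
    (hhi : (k : ℕ) ≠ (i : ℕ) + 1) : Commute (Tg (q := q) (u := u) i) (Xg k) := by
  have := RingQuot.mkAlgHom_rel ℂ (AKRel.farComm (q := q) (u := u) i k ⟨hlo, hhi⟩)
  rw [map_mul, map_mul] at this
  exact this

theorem Tg_mul_Xg_loIdx (i : Fin (n - 1)) :
    Tg (q := q) (u := u) i * Xg (loIdx i) =
      Xg (hiIdx i) * Tg i - (q - 1) • crossSum u (Xg (loIdx i)) (Xg (hiIdx i)) := by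
  have := RingQuot.mkAlgHom_rel ℂ (AKRel.cross (q := q) (u := u) i)
  simp only [map_mul, map_sub, map_smul, map_sum, ← aeval_algHom_apply] at this
  exact this

theorem Tg_mul_Xg_add_Xg (i : Fin (n - 1)) :
    Tg (q := q) (u := u) i * (Xg (hiIdx i) + Xg (loIdx i)) =
      (Xg (hiIdx i) + Xg (loIdx i)) * Tg i := by
  have := RingQuot.mkAlgHom_rel ℂ (AKRel.sumComm (q := q) (u := u) i)
  simp only [map_mul, map_add] at this
  exact this

theorem Tg_mul_lagProd (hu : Function.Injective u) (i : Fin (n - 1)) (a b : Fin r) :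
    Tg (q := q) (u := u) i * lagProd u (Xg (loIdx i)) (Xg (hiIdx i)) a b =
      lagProd u (Xg (loIdx i)) (Xg (hiIdx i)) b a * Tg i +
        (if a < b then (q - 1) • lagProd u (Xg (loIdx i)) (Xg (hiIdx i)) a b else 0) -
          (if b < a then (q - 1) • lagProd u (Xg (loIdx i)) (Xg (hiIdx i)) b a else 0) :=
  mul_lagProd_of_cross hu (Xg_commute _ _) (aeval_Xg_prod_X_sub_C _) (aeval_Xg_prod_X_sub_C _)
    (Tg_mul_Xg_loIdx i) (Tg_mul_Xg_add_Xg i) a b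

theorem Tg_commute_prod_ofFn_aeval (i : Fin (n - 1)) {l : ℕ} (f : Fin l → Fin n)
    (hf : ∀ k, (f k : ℕ) ≠ i ∧ (f k : ℕ) ≠ (i : ℕ) + 1) (p : Fin l → ℂ[X]) :
    Commute (Tg (q := q) (u := u) i) (List.ofFn fun k => aeval (Xg (f k)) (p k)).prod := by
  refine Commute.list_prod_right _ _ fun z hz => ?_
  obtain ⟨k, rfl⟩ := List.mem_ofFn.mp hz
  exact commute_aeval_of_commute (Tg_commute_Xg i (f k) (hf k).1 (hf k).2) _

theorem L_eq_mul_lagProd_mul {j m : ℕ} (c : Fin (j + 2 + m) → Fin r) :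
    L (q := q) (u := u) c =
      (List.ofFn fun k : Fin j =>
          aeval (Xg (k.castLE (by omega))) (Lag u (c (k.castLE (by omega))))).prod *
        lagProd u (Xg ⟨j, by omega⟩) (Xg ⟨j + 1, by omega⟩)
          (c ⟨j, by omega⟩) (c ⟨j + 1, by omega⟩) *
          (List.ofFn fun k : Fin m =>
            aeval (Xg (k.natAdd (j + 2))) (Lag u (c (k.natAdd (j + 2))))).prod :=
  prod_ofFn_add_two_add _

theorem TgPos_mul_L (hu : Function.Injective u) (c : Fin n → Fin r) (j : ℕ) (h : j + 1 < n) :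
    TgPos (q := q) (u := u) j h * L c =
      L (c ∘ sw j h) * TgPos j h +
        (if c ⟨j, by omega⟩ < c ⟨j + 1, h⟩ then (q - 1) • L c else 0) -
          (if c ⟨j + 1, h⟩ < c ⟨j, by omega⟩ then (q - 1) • L (c ∘ sw j h) else 0) := by
  obtain ⟨m, rfl⟩ : ∃ m, n = j + 2 + m := ⟨n - (j + 2), by omega⟩
  have hfix : ∀ k : Fin (j + 2 + m), (k : ℕ) ≠ j → (k : ℕ) ≠ j + 1 → sw j h k = k :=
    fun k hk hk' => Equiv.swap_apply_of_ne_of_ne (Fin.ne_of_val_ne hk) (Fin.ne_of_val_ne hk')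
  have hpre (k : Fin j) : c (sw j h (k.castLE (by omega))) = c (k.castLE _) :=
    congrArg c <| hfix _ (by simp only [Fin.val_castLE]; omega)
      (by simp only [Fin.val_castLE]; omega)
  have hsuf (k : Fin m) : c (sw j h (k.natAdd (j + 2))) = c (k.natAdd (j + 2)) :=
    congrArg c <| hfix _ (by simp only [Fin.val_natAdd]; omega)
      (by simp only [Fin.val_natAdd]; omega)
  have hlo : sw j h ⟨j, by omega⟩ = ⟨j + 1, h⟩ := Equiv.swap_apply_left _ _
  have hhi : sw j h ⟨j + 1, h⟩ = ⟨j, by omega⟩ := Equiv.swap_apply_right _ _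
  rw [L_eq_mul_lagProd_mul c, L_eq_mul_lagProd_mul (c ∘ sw j h)]
  simp only [Function.comp_apply, hpre, hsuf, hlo, hhi]
  have hP := Tg_commute_prod_ofFn_aeval (n := j + 2 + m) (q := q) (u := u) ⟨j, by omega⟩
    (fun k : Fin j => k.castLE (by omega)) (fun k => by simp only [Fin.val_castLE]; omega)
    fun k => Lag u (c (k.castLE (by omega)))
  have hS := Tg_commute_prod_ofFn_aeval (n := j + 2 + m) (q := q) (u := u) ⟨j, by omega⟩
    (fun k : Fin m => k.natAdd (j + 2)) (fun k => by simp only [Fin.val_natAdd]; omega)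
    fun k => Lag u (c (k.natAdd _))
  have key := Tg_mul_lagProd (n := j + 2 + m) (q := q) hu ⟨j, by omega⟩
    (c ⟨j, by omega⟩) (c ⟨j + 1, h⟩)
  dsimp only [loIdx, hiIdx] at key
  rw [TgPos, ← mul_assoc, ← mul_assoc, hP.eq, mul_assoc _ (Tg _), key]
  simp only [mul_add, add_mul, mul_sub, sub_mul, mul_ite, ite_mul, mul_zero, zero_mul,
    smul_mul_assoc, mul_smul_comm, mul_assoc, hS.eq]

end AK

theorem commutation_T_L (n r : ℕ) (q : ℂ) (u : Fin r → ℂ)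
    (hu : Function.Injective u) (c : Fin n → Fin r) (j : ℕ) (h : j + 1 < n) :
    (c ⟨j, by omega⟩ < c ⟨j + 1, h⟩ →
      TgPos (q := q) (u := u) j h * L c =
        L (c ∘ ⇑(sw j h)) * TgPos j h + (q - 1) • L c) ∧
    (c ⟨j, by omega⟩ = c ⟨j + 1, h⟩ →
      TgPos (q := q) (u := u) j h * L c = L c * TgPos j h) ∧
    (c ⟨j + 1, h⟩ < c ⟨j, by omega⟩ →
      TgPos (q := q) (u := u) j h * L c =
        L (c ∘ ⇑(sw j h)) * TgPos j h - (q - 1) • L (c ∘ ⇑(sw j h))) := by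
  have hTL := TgPos_mul_L (q := q) hu c j h
  refine ⟨fun hlt => ?_, fun heq => ?_, fun hgt => ?_⟩
  · rw [hTL, if_pos hlt, if_neg hlt.asymm, sub_zero]
  · rw [hTL, if_neg heq.not_lt, if_neg heq.symm.not_lt, add_zero, sub_zero,
      comp_sw_of_eq c j h heq]
  · rw [hTL, if_neg hgt.asymm, if_pos hgt, add_zero]

end

end AKSPaper
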